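/- arXiv:2511.05549 — 2 statements merged into one kernel-verified Lean document; each statement's English description precedes it below -/
import Mathlib

section
/- The Minimum Cost Maximum Influence (MCMI) subgraph decision problem is NP-hard: the decision version of the Steiner tree problem reduces to it in polynomial time by assigning every node influence score 1 and thresholds α = 1, β = γ. Specifically, for a graph with all node scores equal to 1, a connected subgraph containing all terminals with average node score ≥ 1 and total edge cost ≤ γ exists if and only if a Steiner tree of cost ≤ γ exists. -/
/-!
A connected subgraph contains a spanning tree on the same vertices, and since edge costs are
nonnegative that tree costs no more; conversely a tree is connected. With all scores equal to 1
the average score of any nonempty vertex set is exactly 1, so the threshold `α = 1` is always met.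
-/

theorem finsum_mem_le_finsum_mem_of_subset {α M : Type*} [AddCommMonoid M] [PartialOrder M]
    [IsOrderedAddMonoid M] {f : α → M} {s t : Set α} (hst : s ⊆ t) (ht : t.Finite)
    (hf : ∀ x ∈ t, 0 ≤ f x) : ∑ᶠ x ∈ s, f x ≤ ∑ᶠ x ∈ t, f x := by
  rw [finsum_mem_eq_finite_toFinset_sum f (ht.subset hst), finsum_mem_eq_finite_toFinset_sum f ht]
  exact Finset.sum_le_sum_of_subset_of_nonneg (by simpa using hst)
    (fun x hx _ => hf x (by simpa using hx))

theorem Set.Finite.finsum_mem_one {α M : Type*} [AddCommMonoidWithOne M] {s : Set α}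
    (hs : s.Finite) : ∑ᶠ x ∈ s, (1 : M) = s.ncard := by
  rw [finsum_mem_eq_finite_toFinset_sum _ hs, Finset.sum_const, Set.ncard_eq_toFinset_card _ hs,
    nsmul_one]

namespace SimpleGraph.Subgraph

variable {V : Type*} {G : SimpleGraph V}

theorem Connected.exists_isTree_le {H : G.Subgraph} (hH : H.Connected) :
    ∃ T : G.Subgraph, T ≤ H ∧ T.verts = H.verts ∧ T.coe.IsTree := by
  obtain ⟨T, hle, hT⟩ := hH.coe.exists_isTree_le
  let T' : G.Subgraph :=
    { verts := H.verts
      Adj := fun u v => ∃ (hu : u ∈ H.verts) (hv : v ∈ H.verts), T.Adj ⟨u, hu⟩ ⟨v, hv⟩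
      adj_sub := fun ⟨_, _, h⟩ => H.adj_sub (hle h)
      edge_vert := fun ⟨hu, _, _⟩ => hu
      symm := ⟨fun _ _ ⟨hu, hv, h⟩ => ⟨hv, hu, h.symm⟩⟩ }
  have hcoe : T'.coe = T := by
    ext u v
    exact ⟨fun ⟨_, _, h⟩ => h, fun h => ⟨u.2, v.2, h⟩⟩
  exact ⟨T', ⟨subset_rfl, fun _ _ ⟨_, _, h⟩ => hle h⟩, rfl, hcoe ▸ hT⟩

end SimpleGraph.Subgraph

theorem mcmi_feasible_iff_steiner_feasible_general
    {V : Type*} [Fintype V] (G : SimpleGraph V)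
    (c : Sym2 V → ℝ) (hc : ∀ e, 0 ≤ c e)
    (term : Set V) (γ : ℝ)
    (s : V → ℝ) (hs : ∀ v, s v = 1) :
    (∃ H : G.Subgraph, H.Connected ∧ term ⊆ H.verts ∧
        1 ≤ (1 / (H.verts.ncard : ℝ)) * ∑ᶠ v ∈ H.verts, s v ∧
        ∑ᶠ e ∈ H.edgeSet, c e ≤ γ) ↔
    (∃ H : G.Subgraph, H.coe.IsTree ∧ term ⊆ H.verts ∧
        ∑ᶠ e ∈ H.edgeSet, c e ≤ γ) := by
  constructor
  · rintro ⟨H, hconn, hterm, -, hcost⟩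
    obtain ⟨T, hle, hverts, hT⟩ := hconn.exists_isTree_le
    have hcost_le : ∑ᶠ e ∈ T.edgeSet, c e ≤ ∑ᶠ e ∈ H.edgeSet, c e :=
      finsum_mem_le_finsum_mem_of_subset (SimpleGraph.Subgraph.edgeSet_mono hle)
        (Set.toFinite _) fun e _ => hc e
    exact ⟨T, hT, hverts ▸ hterm, hcost_le.trans hcost⟩
  · rintro ⟨H, hT, hterm, hcost⟩
    have hconn : H.Connected := ⟨hT.connected⟩
    have hcard : (H.verts.ncard : ℝ) ≠ 0 :=
      Nat.cast_ne_zero.mpr ((Set.ncard_pos (Set.toFinite _)).mpr hconn.nonempty).ne'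
    refine ⟨H, hconn, hterm, ?_, hcost⟩
    simp only [hs, (Set.toFinite H.verts).finsum_mem_one, one_div_mul_cancel hcard, le_refl]

/-- NP-hardness reduction from Steiner tree to MCMI: with all node influence
scores equal to 1 and thresholds `α = 1`, `β = γ`, a connected subgraph
containing all terminals with average node score ≥ 1 and total edge cost ≤ γ
exists iff a Steiner tree (a tree containing all terminals) of cost ≤ γ
exists. -/
theorem mcmi_feasible_iff_steiner_feasible
    {V : Type*} [Fintype V] (G : SimpleGraph V) (hG : G.Connected)
    (c : Sym2 V → ℝ) (hc : ∀ e, 0 ≤ c e)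
    (term : Set V) (γ : ℝ) (hγ : 0 < γ)
    (s : V → ℝ) (hs : ∀ v, s v = 1) :
    (∃ H : G.Subgraph, H.Connected ∧ term ⊆ H.verts ∧
        1 ≤ (1 / (H.verts.ncard : ℝ)) * ∑ᶠ v ∈ H.verts, s v ∧
        ∑ᶠ e ∈ H.edgeSet, c e ≤ γ) ↔
    (∃ H : G.Subgraph, H.coe.IsTree ∧ term ⊆ H.verts ∧
        ∑ᶠ e ∈ H.edgeSet, c e ≤ γ) :=
  mcmi_feasible_iff_steiner_feasible_general G c hc term γ s hs
end

section
/- In a metric graph (complete graph whose edge costs satisfy the triangle inequality), the cost of a minimum spanning tree on the terminal set is at most twice the cost of an optimal Steiner tree connecting the terminals. -/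
/-!
Splicing `v u v` into a tour of `T - u`, where `u` is a leaf of the tree `T` with neighbour `v`,
gives by induction a vertex sequence through all of `T` whose consecutive costs sum to exactly
twice the cost of `T` (an Euler tour of the doubled tree). By the triangle inequality, keeping
only the first visit of each terminal does not increase this cost, and consecutive distinct
terminals form a path, hence a spanning tree on the terminals.
-/

open SimpleGraph

section

variable {V W : Type*}

namespace List

def pathCost (w : Sym2 V → ℝ) : List V → ℝ
  | a :: b :: l => w s(a, b) + pathCost w (b :: l)
  | _ => 0

section pathCost

variable (w : Sym2 V → ℝ)

@[simp] lemma pathCost_nil : pathCost w [] = 0 := rfl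
@[simp] lemma pathCost_singleton (a : V) : pathCost w [a] = 0 := rfl
@[simp] lemma pathCost_cons_cons (a b : V) (l : List V) :
    pathCost w (a :: b :: l) = w s(a, b) + pathCost w (b :: l) := rfl

lemma pathCost_append_cons (a : V) : ∀ l₁ l₂ : List V,
    pathCost w (l₁ ++ a :: l₂) = pathCost w (l₁ ++ [a]) + pathCost w (a :: l₂)
  | [], _ => by simp
  | [_], _ => by simp
  | b :: c :: l₁, l₂ => by
    have ih := pathCost_append_cons a (c :: l₁) l₂
    simp only [cons_append, pathCost_cons_cons] at ih ⊢
    rw [ih]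
    ring

lemma pathCost_append_detour (p q : List V) (u v : V) :
    pathCost w (p ++ v :: u :: v :: q) = pathCost w (p ++ v :: q) + 2 * w s(u, v) := by
  rw [pathCost_append_cons w v p (u :: v :: q), pathCost_append_cons w v p q]
  simp only [pathCost_cons_cons, Sym2.eq_swap (a := v)]
  ring

lemma pathCost_map (f : W → V) : ∀ l : List W,
    pathCost w (l.map f) = pathCost (w ∘ Sym2.map f) l
  | [] | [_] => rfl
  | a :: b :: l => by simp [← pathCost_map f (b :: l)]

variable {w} (hw : ∀ e, 0 ≤ w e) (htri : ∀ a b c, w s(a, c) ≤ w s(a, b) + w s(b, c))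
include hw

lemma pathCost_le_cons (a : V) : ∀ l : List V, pathCost w l ≤ pathCost w (a :: l)
  | [] => le_rfl
  | _ :: _ => le_add_of_nonneg_left (hw _)

include htri

lemma pathCost_cons_le_cons_cons (a b : V) :
    ∀ l : List V, pathCost w (a :: l) ≤ pathCost w (a :: b :: l)
  | [] => by simpa using hw _
  | c :: l => by simpa [← add_assoc] using htri a b c

/-- The second conjunct, with a fixed first vertex, is what makes the induction go through. -/
lemma Sublist.pathCost_le {l₁ l₂ : List V} (h : l₁.Sublist l₂) :
    pathCost w l₁ ≤ pathCost w l₂ ∧ ∀ a, pathCost w (a :: l₁) ≤ pathCost w (a :: l₂) := by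
  induction h with
  | slnil => simp
  | cons b _ ih =>
    exact ⟨ih.1.trans (pathCost_le_cons hw b _),
      fun a => (ih.2 a).trans (pathCost_cons_le_cons_cons hw htri a b _)⟩
  | cons_cons b _ ih => exact ⟨ih.2 b, fun a => by simpa using ih.2 b⟩

end pathCost

lemma Nodup.ncard_setOf_mem {l : List V} (h : l.Nodup) : {a | a ∈ l}.ncard = l.length := by
  classical
  rw [← coe_toFinset, Set.ncard_coe_finset, toFinset_card_of_nodup h]

end List

namespace SimpleGraph

variable {G : SimpleGraph V}

namespace Walk

variable {u v : V}

lemma sum_map_edges_eq_pathCost (w : Sym2 V → ℝ) (p : G.Walk u v) :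
    (p.edges.map w).sum = p.support.pathCost w := by
  induction p with
  | nil => rfl
  | cons _ p ih =>
    rw [edges_cons, List.map_cons, List.sum_cons, ih, support_cons, ← cons_tail_support p,
      List.pathCost_cons_cons]

lemma IsTrail.finsum_edgeSet {p : G.Walk u v} (hp : p.IsTrail) (w : Sym2 V → ℝ) :
    ∑ᶠ e ∈ p.edgeSet, w e = (p.edges.map w).sum := by
  classical
  rw [Walk.edgeSet, ← List.coe_toFinset, finsum_mem_coe_finset, List.sum_toFinset _ hp.edges_nodup]

lemma IsPath.isTree_toSubgraph {p : G.Walk u v} (hp : p.IsPath) : p.toSubgraph.coe.IsTree := by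
  have : Finite p.toSubgraph.verts := by
    rw [verts_toSubgraph]
    exact (List.finite_toSet _).to_subtype
  rw [isTree_iff_connected_and_card]
  refine ⟨p.toSubgraph_connected.coe, ?_⟩
  rw [← Nat.card_image_of_injective (Sym2.map.injective Subtype.val_injective),
    Subgraph.image_coe_edgeSet_coe, edgeSet_toSubgraph, verts_toSubgraph, Nat.card_coe_set_eq,
    Nat.card_coe_set_eq, Walk.edgeSet, hp.edges_nodup.ncard_setOf_mem,
    hp.support_nodup.ncard_setOf_mem, length_edges, length_support]

end Walk

lemma exists_walk_top_support_eq (a : V) (l : List V) (h : (a :: l).Nodup) :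
    ∃ b, ∃ p : (⊤ : SimpleGraph V).Walk a b, p.support = a :: l := by
  induction l generalizing a with
  | nil => exact ⟨a, .nil, rfl⟩
  | cons c l ih =>
    obtain ⟨b, p, hp⟩ := ih c (List.nodup_cons.mp h).2
    have hac : a ≠ c := fun hac => (List.nodup_cons.mp h).1 (hac ▸ List.mem_cons_self)
    exact ⟨b, .cons ((top_adj a c).mpr hac) p, by rw [Walk.support_cons, hp]⟩

lemma edgeSet_eq_insert_image_induce_compl {u v : V} (hleaf : ∀ x, G.Adj u x ↔ x = v) :
    G.edgeSet = insert s(u, v) (Sym2.map (↑) '' (G.induce {u}ᶜ).edgeSet) := by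
  ext e
  refine ⟨fun he => ?_, ?_⟩
  · induction e with
    | h x y =>
      by_cases hx : x = u
      · subst hx
        rw [(hleaf y).mp he]
        exact Set.mem_insert _ _
      by_cases hy : y = u
      · subst hy
        rw [(hleaf x).mp he.symm, Sym2.eq_swap]
        exact Set.mem_insert _ _
      exact Set.mem_insert_of_mem _ ⟨s(⟨x, hx⟩, ⟨y, hy⟩), he, rfl⟩
  · rintro (rfl | ⟨e, he, rfl⟩)
    · exact (hleaf v).mpr rfl
    · exact (Embedding.induce _).toHom.map_mem_edgeSet he

lemma finsum_edgeSet_eq_add_induce_compl [Finite V] {u v : V} (hleaf : ∀ x, G.Adj u x ↔ x = v)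
    (w : Sym2 V → ℝ) :
    ∑ᶠ e ∈ G.edgeSet, w e = w s(u, v) + ∑ᶠ e ∈ (G.induce {u}ᶜ).edgeSet, w (e.map (↑)) := by
  have hu : s(u, v) ∉ Sym2.map (↑) '' (G.induce {u}ᶜ).edgeSet := by
    rintro ⟨e, -, he⟩
    obtain ⟨z, -, hzu⟩ := Sym2.mem_map.mp (he ▸ Sym2.mem_mk_left u v)
    exact z.2 hzu
  rw [edgeSet_eq_insert_image_induce_compl hleaf, finsum_mem_insert _ hu (Set.toFinite _),
    finsum_mem_image (Sym2.map.injective Subtype.val_injective).injOn]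

theorem IsTree.exists_tour [Finite V] (hG : G.IsTree) (w : Sym2 V → ℝ) :
    ∃ l : List V, (∀ x, x ∈ l) ∧ l.pathCost w = 2 * ∑ᶠ e ∈ G.edgeSet, w e := by
  induction hn : Nat.card V generalizing V with
  | zero =>
    have := hG.connected.nonempty
    exact absurd hn Nat.card_pos.ne'
  | succ n ih =>
    rcases subsingleton_or_nontrivial V with _ | _
    · obtain ⟨a⟩ := hG.connected.nonempty
      have : G.edgeSet = ∅ := Set.eq_empty_of_forall_notMem fun e he => by
        induction e with
        | h x y => exact G.ne_of_adj he (Subsingleton.elim x y)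
      exact ⟨[a], fun x => by simp [Subsingleton.elim x a], by simp [this]⟩
    classical
    have := Fintype.ofFinite V
    obtain ⟨u, hu⟩ := hG.exists_vert_degree_one_of_nontrivial
    obtain ⟨v, huv, hv⟩ := degree_eq_one_iff_existsUnique_adj.mp hu
    have hleaf : ∀ x, G.Adj u x ↔ x = v := fun x => ⟨hv x, fun h => h ▸ huv⟩
    have hG' : (G.induce {u}ᶜ).IsTree :=
      ⟨hG.connected.induce_compl_singleton_of_degree_eq_one hu, hG.isAcyclic.induce _⟩
    have hcard : Nat.card ({u}ᶜ : Set V) = n := by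
      rw [Nat.card_coe_set_eq, Set.ncard_compl, Set.ncard_singleton, hn, Nat.add_sub_cancel]
    obtain ⟨l, hl, hcost⟩ := ih hG' (w ∘ Sym2.map (↑)) hcard
    have hmem : ∀ x : ({u}ᶜ : Set V), x.1 ∈ l.map (↑) := fun x => List.mem_map_of_mem (hl x)
    obtain ⟨p, q, hpq⟩ := List.append_of_mem (hmem ⟨v, huv.ne'⟩)
    refine ⟨p ++ v :: u :: v :: q, fun x => ?_, ?_⟩
    · by_cases hx : x = u
      · simp [hx]
      · have := hpq ▸ hmem ⟨x, hx⟩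
        simp only [List.mem_append, List.mem_cons] at this ⊢
        tauto
    · simp only [Function.comp_apply] at hcost
      rw [finsum_edgeSet_eq_add_induce_compl hleaf, mul_add, ← hcost, ← List.pathCost_map, hpq,
        List.pathCost_append_detour, add_comm]

theorem Subgraph.exists_tour [Finite V] {H : G.Subgraph} (hH : H.coe.IsTree) (w : Sym2 V → ℝ) :
    ∃ l : List V, (∀ x, x ∈ l ↔ x ∈ H.verts) ∧ l.pathCost w = 2 * ∑ᶠ e ∈ H.edgeSet, w e := by
  obtain ⟨l, hl, hcost⟩ := hH.exists_tour (w ∘ Sym2.map (↑))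
  refine ⟨l.map (↑), fun x => ⟨fun hx => ?_, fun hx => List.mem_map_of_mem (hl ⟨x, hx⟩)⟩, ?_⟩
  · obtain ⟨y, -, rfl⟩ := List.mem_map.mp hx
    exact y.2
  · rw [List.pathCost_map, hcost, ← Subgraph.image_coe_edgeSet_coe,
      finsum_mem_image (Sym2.map.injective Subtype.val_injective).injOn, Function.comp_def]

end SimpleGraph

end

theorem mst_on_terminals_le_two_steiner_general
    {V : Type*} [Fintype V]
    (c : V → V → ℝ) (hsymm : ∀ u v, c u v = c v u)
    (hnonneg : ∀ u v, 0 ≤ c u v)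
    (htri : ∀ u v w, c u w ≤ c u v + c v w)
    (term : Set V) (hterm : term.Nonempty)
    (H : (⊤ : SimpleGraph V).Subgraph)
    (hHtree : H.coe.IsTree) (hHterm : term ⊆ H.verts) :
    ∃ H' : (⊤ : SimpleGraph V).Subgraph,
      H'.verts = term ∧ H'.coe.IsTree ∧
      ∑ᶠ e ∈ H'.edgeSet, Sym2.lift ⟨c, hsymm⟩ e ≤
        2 * ∑ᶠ e ∈ H.edgeSet, Sym2.lift ⟨c, hsymm⟩ e := by
  classical
  set w := Sym2.lift ⟨c, hsymm⟩
  have hw : ∀ e, 0 ≤ w e := Sym2.ind hnonneg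
  obtain ⟨l, hl, hcost⟩ := H.exists_tour hHtree w
  obtain ⟨t, htl, htnd, ht⟩ : ∃ t : List V, t.Sublist l ∧ t.Nodup ∧ ∀ x, x ∈ t ↔ x ∈ term :=
    ⟨(l.filter (· ∈ term)).dedup, (List.dedup_sublist _).trans List.filter_sublist,
      List.nodup_dedup _, fun x => by simpa [hl] using fun hx => hHterm hx⟩
  obtain ⟨a, t, rfl⟩ :=
    List.exists_cons_of_ne_nil (List.ne_nil_of_mem ((ht _).mpr hterm.some_mem))
  obtain ⟨b, p, hp⟩ := exists_walk_top_support_eq a t htnd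
  have hpath : p.IsPath := Walk.IsPath.mk' (hp ▸ htnd)
  refine ⟨p.toSubgraph, Set.ext fun x => by rw [Walk.verts_toSubgraph, Set.mem_ofPred_eq, hp, ht],
    hpath.isTree_toSubgraph, ?_⟩
  calc ∑ᶠ e ∈ p.toSubgraph.edgeSet, w e = (a :: t).pathCost w := by
        rw [Walk.edgeSet_toSubgraph, hpath.isTrail.finsum_edgeSet,
          Walk.sum_map_edges_eq_pathCost, hp]
    _ ≤ l.pathCost w := (htl.pathCost_le hw htri).1
    _ = 2 * ∑ᶠ e ∈ H.edgeSet, w e := hcost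

/-- In a finite complete graph with metric edge costs (symmetric, zero on the
diagonal, triangle inequality), for every Steiner tree spanning the terminal
set there is a spanning tree on the terminal set alone of cost at most twice
the Steiner tree's cost; hence the minimum spanning tree on the terminals
costs at most twice the optimal Steiner tree. -/
theorem mst_on_terminals_le_two_steiner
    {V : Type*} [Fintype V]
    (c : V → V → ℝ) (hsymm : ∀ u v, c u v = c v u)
    (hdiag : ∀ v, c v v = 0) (hnonneg : ∀ u v, 0 ≤ c u v)
    (htri : ∀ u v w, c u w ≤ c u v + c v w)
    (term : Set V) (hterm : term.Nonempty)
    (H : (⊤ : SimpleGraph V).Subgraph)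
    (hHtree : H.coe.IsTree) (hHterm : term ⊆ H.verts) :
    ∃ H' : (⊤ : SimpleGraph V).Subgraph,
      H'.verts = term ∧ H'.coe.IsTree ∧
      ∑ᶠ e ∈ H'.edgeSet, Sym2.lift ⟨c, hsymm⟩ e ≤
        2 * ∑ᶠ e ∈ H.edgeSet, Sym2.lift ⟨c, hsymm⟩ e :=
  mst_on_terminals_le_two_steiner_general c hsymm hnonneg htri term hterm H hHtree hHterm
end
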